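/- arXiv:2002.03041 — 2 statements merged into one kernel-verified Lean document; each statement's English description precedes it below -/
import Mathlib

section
/- Let K be a field and m ≥ 1. For formal power series φ, ψ ∈ K[[t_1,…,t_m]], the Newton polygon of the support of the product equals the Minkowski sum of the individual Newton polygons: N(Supp(φ·ψ)) = N(Supp(φ)) + N(Supp(ψ)) = N(Supp(φ) + Supp(ψ)). -/
/-!
Since `Supp (φ * ψ) ⊆ Supp φ + Supp ψ` and convex hulls commute with Minkowski sums, only
`N(Supp φ) + N(Supp ψ) ⊆ N(Supp (φ * ψ))` needs an argument. By Dickson's lemma `N(X)` is the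
convex hull of the finitely many minimal elements of `X` plus the closed orthant, hence closed,
so a point `x + y + u` outside `N(Supp (φ * ψ))` is separated from it by a linear functional `g`,
which is nonnegative on the orthant. Breaking the ties of `g` lexicographically gives an injective
additive weight on exponents; its minimisers `a` on `Supp φ` and `b` on `Supp ψ` satisfy
`coeff (a + b) (φ * ψ) = coeff a φ * coeff b ψ ≠ 0`, while `g (a + b) ≤ g (x + y + u)` puts
`a + b` on the wrong side of the separating hyperplane.
-/

open Pointwise

noncomputable section

/-- The embedding of `ℤ_{≥0}^m` into `ℝ^m`. -/
def emb {m : ℕ} (x : Fin m →₀ ℕ) : Fin m → ℝ := fun i => (x i : ℝ)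

/-- The Newton polygon of `X ⊆ ℤ_{≥0}^m`: the convex hull (in `ℝ^m`) of
`X + ℤ_{≥0}^m`. -/
def newton {m : ℕ} (X : Set (Fin m →₀ ℕ)) : Set (Fin m → ℝ) :=
  convexHull ℝ (emb '' (X + (Set.univ : Set (Fin m →₀ ℕ))))

/-- The vertex set of `X`: the elements `x ∈ X` with `x ∉ N(X \ {x})`. -/
def vert {m : ℕ} (X : Set (Fin m →₀ ℕ)) : Set (Fin m →₀ ℕ) :=
  {x ∈ X | emb x ∉ newton (X \ {x})}

variable {K : Type} [Field K]

/-- The support of a multivariate formal power series. -/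
def supp {m : ℕ} (φ : MvPowerSeries (Fin m) K) : Set (Fin m →₀ ℕ) :=
  {L | MvPowerSeries.coeff L φ ≠ 0}

/-- The tropicalization of a multivariate formal power series: the vertex set of
its support. -/
def trop {m : ℕ} (φ : MvPowerSeries (Fin m) K) : Set (Fin m →₀ ℕ) :=
  vert (supp φ)

namespace NewtonPolygon

variable {m : ℕ}

def embAddHom : (Fin m →₀ ℕ) →+ (Fin m → ℝ) where
  toFun := emb
  map_zero' := by ext; simp [emb]
  map_add' a b := by ext; simp [emb]

lemma image_emb_add (A B : Set (Fin m →₀ ℕ)) :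
    emb '' (A + B) = emb '' A + emb '' B :=
  Set.image_add embAddHom

lemma convexHull_range_natCast : convexHull ℝ (Set.range ((↑) : ℕ → ℝ)) = Set.Ici 0 := by
  refine subset_antisymm (convexHull_min ?_ (convex_Ici 0)) fun t ht => ?_
  · rintro - ⟨n, rfl⟩
    exact Set.mem_Ici.mpr n.cast_nonneg
  · have hle : (⌊t⌋₊ : ℝ) ≤ ((⌊t⌋₊ + 1 : ℕ) : ℝ) := by push_cast; linarith
    have hseg : t ∈ segment ℝ (⌊t⌋₊ : ℝ) ((⌊t⌋₊ + 1 : ℕ) : ℝ) := by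
      rw [segment_eq_Icc hle]
      exact ⟨Nat.floor_le ht, by push_cast; exact (Nat.lt_floor_add_one t).le⟩
    rw [← convexHull_pair] at hseg
    exact convexHull_mono (Set.pair_subset (Set.mem_range_self _) (Set.mem_range_self _)) hseg

lemma convexHull_image_emb_univ :
    convexHull ℝ (emb '' (Set.univ : Set (Fin m →₀ ℕ))) = Set.Ici 0 := by
  have : emb '' (Set.univ : Set (Fin m →₀ ℕ)) = Set.univ.pi fun _ => Set.range ((↑) : ℕ → ℝ) := by
    ext w
    refine ⟨by rintro ⟨x, -, rfl⟩ i -; exact ⟨x i, rfl⟩, fun h => ?_⟩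
    choose n hn using fun i => h i trivial
    exact ⟨Finsupp.equivFunOnFinite.symm n, trivial, funext hn⟩
  rw [this, convexHull_pi, convexHull_range_natCast]
  ext w
  simp [Pi.le_def]

lemma newton_eq_convexHull_add_Ici (X : Set (Fin m →₀ ℕ)) :
    newton X = convexHull ℝ (emb '' X) + Set.Ici 0 := by
  rw [newton, image_emb_add, convexHull_add, convexHull_image_emb_univ]

lemma newton_add (X Y : Set (Fin m →₀ ℕ)) : newton (X + Y) = newton X + newton Y := by
  have hIci : (Set.Ici 0 : Set (Fin m → ℝ)) + Set.Ici 0 = Set.Ici 0 := by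
    rw [← convexHull_image_emb_univ, ← convexHull_add, ← image_emb_add, Set.univ_add_univ]
  simp only [newton_eq_convexHull_add_Ici, image_emb_add, convexHull_add]
  rw [add_add_add_comm, hIci]

lemma emb_add_mem_newton {X : Set (Fin m →₀ ℕ)} {x : Fin m →₀ ℕ} (hx : x ∈ X)
    (u : Fin m →₀ ℕ) : emb (x + u) ∈ newton X :=
  subset_convexHull ℝ _ ⟨x + u, Set.add_mem_add hx trivial, rfl⟩

lemma newton_subset_of_forall_exists_le {X Y : Set (Fin m →₀ ℕ)}
    (h : ∀ x ∈ X, ∃ y ∈ Y, y ≤ x) : newton X ⊆ newton Y := by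
  refine convexHull_min ?_ (convex_convexHull ℝ _)
  rintro - ⟨-, ⟨x, hx, u, -, rfl⟩, rfl⟩
  obtain ⟨y, hy, hyx⟩ := h x hx
  change emb (x + u) ∈ _
  rw [← add_tsub_cancel_of_le hyx, add_assoc]
  exact emb_add_mem_newton hy _

lemma newton_mono {X Y : Set (Fin m →₀ ℕ)} (h : X ⊆ Y) : newton X ⊆ newton Y :=
  newton_subset_of_forall_exists_le fun x hx => ⟨x, h hx, le_rfl⟩

lemma isClosed_newton (X : Set (Fin m →₀ ℕ)) : IsClosed (newton X) := by
  set M := {x | Minimal (· ∈ X) x}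
  have hM : M.Finite := WellQuasiOrderedLE.finite_of_isAntichain (setOfPred_minimal_antichain _)
  have hXM : newton X = newton M := by
    refine subset_antisymm (newton_subset_of_forall_exists_le fun x hx => ?_)
      (newton_mono fun x hx => hx.prop)
    obtain ⟨y, hyx, hy⟩ := (Set.isPWO_of_wellQuasiOrderedLE X).exists_le_minimal hx
    exact ⟨y, hy, hyx⟩
  rw [hXM, newton_eq_convexHull_add_Ici]
  exact isClosed_Ici.add_left_of_isCompact ((hM.image emb).isCompact_convexHull ℝ)

end NewtonPolygon

section Order

variable {α Γ : Type*}

lemma exists_forall_le_of_monotone [Preorder α] [WellQuasiOrderedLE α] [LinearOrder Γ]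
    {f : α → Γ} (hf : Monotone f) {X : Set α} (hX : X.Nonempty) :
    ∃ z ∈ X, ∀ x ∈ X, f z ≤ f x := by
  obtain ⟨z, hzX, hz⟩ :=
    ((Set.isPWO_of_wellQuasiOrderedLE X).image_of_monotone hf).exists_minimalFor f X hX
  exact ⟨z, hzX, fun x hx => (le_total (f z) (f x)).elim id (hz hx)⟩

lemma AddMonoidHom.monotone_of_nonneg [AddCommMonoid α] [PartialOrder α] [CanonicallyOrderedAdd α]
    [AddCommMonoid Γ] [PartialOrder Γ] [IsOrderedAddMonoid Γ] (g : α →+ Γ) (hg : ∀ d, 0 ≤ g d) :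
    Monotone g := by
  intro x y hxy
  obtain ⟨d, rfl⟩ := exists_add_of_le hxy
  rw [map_add]
  exact le_add_of_nonneg_right (hg d)

lemma nonneg_of_forall_lt_add_nat_mul {a b c : ℝ} (h : ∀ n : ℕ, c < a + n * b) : 0 ≤ b := by
  by_contra! hb
  obtain ⟨n, hn⟩ := exists_nat_gt ((a - c) / -b)
  have := h n
  rw [div_lt_iff₀ (neg_pos.mpr hb)] at hn
  linarith

end Order

section LexRefine

variable {σ : Type*} (g : (σ →₀ ℕ) →+ ℝ)

def lexRefine : (σ →₀ ℕ) →+ ℝ ×ₗ Lex (σ →₀ ℕ) where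
  toFun x := toLex (g x, toLex x)
  map_zero' := by simp
  map_add' x y := by simp; rfl

lemma lexRefine_injective : Function.Injective (lexRefine g) :=
  fun _ _ h => toLex.injective (congrArg (fun p => (ofLex p).2) h)

variable [LinearOrder σ]

lemma lexRefine_monotone (hg : Monotone g) : Monotone (lexRefine g) :=
  fun _ _ hxy => Prod.Lex.toLex_mono ⟨hg hxy, Finsupp.toLex_monotone hxy⟩

lemma le_of_lexRefine_le {x y : σ →₀ ℕ} (h : lexRefine g x ≤ lexRefine g y) : g x ≤ g y :=
  Prod.Lex.monotone_fst _ _ h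

end LexRefine

section PowerSeries

variable {σ R : Type*} [CommSemiring R]

lemma MvPowerSeries.coeff_add_mul_of_forall_le {Γ : Type*} [AddCommMonoid Γ] [LinearOrder Γ]
    [IsOrderedCancelAddMonoid Γ] (κ : (σ →₀ ℕ) →+ Γ) (hκ : Function.Injective κ)
    {φ ψ : MvPowerSeries σ R} {a b : σ →₀ ℕ}
    (ha : ∀ p, coeff p φ ≠ 0 → κ a ≤ κ p) (hb : ∀ q, coeff q ψ ≠ 0 → κ b ≤ κ q) :
    coeff (a + b) (φ * ψ) = coeff a φ * coeff b ψ := by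
  classical
  rw [coeff_mul]
  refine Finset.sum_eq_single_of_mem (a, b) (Finset.HasAntidiagonal.mem_antidiagonal.mpr rfl) ?_
  rintro ⟨p, q⟩ hpq hne
  rw [Finset.HasAntidiagonal.mem_antidiagonal] at hpq
  by_contra hterm
  have hp := ha p (left_ne_zero_of_mul hterm)
  have hq := hb q (right_ne_zero_of_mul hterm)
  have hsum : κ p + κ q = κ a + κ b := by rw [← map_add, ← map_add, hpq]
  have hpa : p = a := hκ (hp.antisymm' (le_of_not_gt fun hlt =>
    (add_lt_add_of_lt_of_le hlt hq).ne' hsum))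
  subst hpa
  exact hne (Prod.ext rfl (add_left_cancel hpq))

end PowerSeries

open NewtonPolygon

lemma supp_mul_subset {m : ℕ} (φ ψ : MvPowerSeries (Fin m) K) :
    supp (φ * ψ) ⊆ supp φ + supp ψ := by
  classical
  intro L (hL : MvPowerSeries.coeff L (φ * ψ) ≠ 0)
  rw [MvPowerSeries.coeff_mul] at hL
  obtain ⟨p, hp, hne⟩ := Finset.exists_ne_zero_of_sum_ne_zero hL
  exact ⟨p.1, left_ne_zero_of_mul hne, p.2, right_ne_zero_of_mul hne,
    Finset.HasAntidiagonal.mem_antidiagonal.mp hp⟩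

lemma emb_add_add_mem_newton_supp_mul {m : ℕ} {φ ψ : MvPowerSeries (Fin m) K}
    {x y : Fin m →₀ ℕ} (hx : x ∈ supp φ) (hy : y ∈ supp ψ) (u : Fin m →₀ ℕ) :
    emb (x + y + u) ∈ newton (supp (φ * ψ)) := by
  by_contra hv
  obtain ⟨f, c, hfv, hfS⟩ :=
    geometric_hahn_banach_point_closed (convex_convexHull ℝ _) (isClosed_newton _) hv
  set g : (Fin m →₀ ℕ) →+ ℝ := (f : (Fin m → ℝ) →+ ℝ).comp embAddHom
  obtain ⟨s, hs⟩ : (supp (φ * ψ)).Nonempty := (φ * ψ).ne_zero_iff_exists_coeff_ne_zero.mp <|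
    mul_ne_zero (φ.ne_zero_iff_exists_coeff_ne_zero.mpr ⟨x, hx⟩)
      (ψ.ne_zero_iff_exists_coeff_ne_zero.mpr ⟨y, hy⟩)
  have hg_nonneg : ∀ d, 0 ≤ g d := fun d => nonneg_of_forall_lt_add_nat_mul fun n => by
    have h : c < g (s + n • d) := hfS _ (emb_add_mem_newton hs (n • d))
    rwa [map_add, map_nsmul, nsmul_eq_mul] at h
  have hg : Monotone g := g.monotone_of_nonneg hg_nonneg
  obtain ⟨a, ha, ha_min⟩ := exists_forall_le_of_monotone (lexRefine_monotone g hg) ⟨x, hx⟩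
  obtain ⟨b, hb, hb_min⟩ := exists_forall_le_of_monotone (lexRefine_monotone g hg) ⟨y, hy⟩
  have hab : a + b ∈ supp (φ * ψ) := by
    change MvPowerSeries.coeff (a + b) (φ * ψ) ≠ 0
    rw [MvPowerSeries.coeff_add_mul_of_forall_le _ (lexRefine_injective g) ha_min hb_min]
    exact mul_ne_zero ha hb
  have hc : c < g (a + b + 0) := hfS _ (emb_add_mem_newton hab 0)
  have hv' : g (x + y + u) < c := hfv
  simp only [map_add, map_zero] at hc hv'
  linarith [le_of_lexRefine_le g (ha_min x hx), le_of_lexRefine_le g (hb_min y hy), hg_nonneg u]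

theorem newton_supp_mul_general (K : Type) [Field K] (m : ℕ)
    (φ ψ : MvPowerSeries (Fin m) K) :
    newton (supp (φ * ψ)) = newton (supp φ) + newton (supp ψ) ∧
    newton (supp φ) + newton (supp ψ) = newton (supp φ + supp ψ) := by
  rw [← newton_add]
  refine ⟨subset_antisymm (newton_mono (supp_mul_subset φ ψ)) ?_, rfl⟩
  refine convexHull_min ?_ (convex_convexHull ℝ _)
  rintro - ⟨-, ⟨-, ⟨x, hx, y, hy, rfl⟩, u, -, rfl⟩, rfl⟩
  exact emb_add_add_mem_newton_supp_mul hx hy u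

/-- The Newton polygon of the support of a product of power series is the
Minkowski sum of the Newton polygons, which is also the Newton polygon of the
Minkowski sum of the supports. -/
theorem newton_supp_mul (K : Type) [Field K] (m : ℕ) (hm : 1 ≤ m)
    (φ ψ : MvPowerSeries (Fin m) K) :
    newton (supp (φ * ψ)) = newton (supp φ) + newton (supp ψ) ∧
    newton (supp φ) + newton (supp ψ) = newton (supp φ + supp ψ) :=
  newton_supp_mul_general K m φ ψ

end
end

section
/- Let K be an algebraically closed field of characteristic zero, m, n ≥ 1. Let Δ be a finite set of finitely supported maps M : {1,…,n} × ℤ_{≥0}^m → ℤ_{≥0}, and for each M ∈ Δ let α_M ∈ K[[t_1,…,t_m]] be nonzero. Suppose φ = (φ_1,…,φ_n) ∈ K[[t_1,…,t_m]]^n satisfies Σ_{M∈Δ} α_M · ∏_{i,J}(Θ(J)φ_i)^{M_{i,J}} = 0. Let S_i = Supp(φ_i) and for each M ∈ Δ set B_M = Supp(α_M) + Σ_{i,J} M_{i,J}·Θ_trop(J)(S_i) (iterated Minkowski sums, with k·X the k-fold Minkowski sum and 0·X = {(0,…,0)}). Then for every vertex J ∈ Vert(⋃_{M∈Δ} B_M)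 there exist M_1, M_2 ∈ Δ with M_1 ≠ M_2 such that J ∈ Vert(B_{M_1}) and J ∈ Vert(B_{M_2}). (That is, the support of any power series solution of a differential polynomial is a solution of its tropicalization.) -/
open Pointwise

noncomputable section

variable {K : Type} [Field K]

/-- The iterated formal partial derivative `Θ(J)φ`, defined by its coefficients:
the coefficient of `t^L` in `Θ(J)φ` is `((L+J)!/L!) · a_{L+J}`. -/
def theta {m : ℕ} (J : Fin m →₀ ℕ) (φ : MvPowerSeries (Fin m) K) :
    MvPowerSeries (Fin m) K :=
  fun L => ((∏ i : Fin m, ((L i + J i).factorial / (L i).factorial) : ℕ) : K) *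
    MvPowerSeries.coeff (L + J) φ

/-- The tropical derivative operator. -/
def thetaTrop {m : ℕ} (J : Fin m →₀ ℕ) (T : Set (Fin m →₀ ℕ)) : Set (Fin m →₀ ℕ) :=
  {L | L + J ∈ T}

/-- `k`-fold Minkowski sum `kX = X + ⋯ + X`, with `0X = {(0,…,0)}`. -/
def nMink {m : ℕ} : ℕ → Set (Fin m →₀ ℕ) → Set (Fin m →₀ ℕ)
  | 0, _ => {0}
  | k + 1, X => X + nMink k X

/-!
Call `X` a sharp bound for a power series `f` if `supp f ⊆ X` and `f` has a nonzero coefficient at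
every vertex of `X`. A vertex of a Minkowski sum `X + Y` splits uniquely as `a + b` with `a ∈ X`,
`b ∈ Y` (otherwise it is the midpoint of two other points of `X + Y`), and then `a` and `b` are
vertices of `X` and `Y`; hence the coefficient of `f * g` at that vertex is the single nonzero
product `f_a g_b`, so sharp bounds multiply. Derivatives shift supports without killing
coefficients in characteristic zero, so `B M` is a sharp bound for the `M`-th term of the
differential polynomial. At a vertex `J` of `⋃ B M`, the term of some `B M₁ ∋ J` has a nonzero
`J`-coefficient, which must be cancelled by another term `M₂`; then `J ∈ B M₂`, and a vertex of the
union lying in `B M₂` is a vertex of `B M₂`.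
-/

section Newton

variable {m : ℕ}

def embHom : (Fin m →₀ ℕ) →+ (Fin m → ℝ) where
  toFun := emb
  map_zero' := by funext i; simp [emb]
  map_add' a b := by funext i; simp [emb]

lemma emb_add (a b : Fin m →₀ ℕ) : emb (a + b) = emb a + emb b :=
  map_add embHom a b

lemma newton_mono {X Y : Set (Fin m →₀ ℕ)} (h : X ⊆ Y) : newton X ⊆ newton Y :=
  convexHull_mono (Set.image_mono (Set.add_subset_add_right h))

lemma emb_mem_newton {X : Set (Fin m →₀ ℕ)} {x : Fin m →₀ ℕ} (hx : x ∈ X) :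
    emb x ∈ newton X :=
  subset_convexHull ℝ _ ⟨x, Set.mem_add.2 ⟨x, hx, 0, Set.mem_univ 0, add_zero x⟩, rfl⟩

lemma newton_add_singleton (X : Set (Fin m →₀ ℕ)) (b : Fin m →₀ ℕ) :
    newton (X + {b}) = newton X + {emb b} := by
  unfold newton
  rw [add_right_comm X {b}, show emb = ⇑(embHom (m := m)) from rfl, Set.image_add,
    convexHull_add]
  simp

lemma emb_mem_newton_of_add_eq {X : Set (Fin m →₀ ℕ)} {x y J : Fin m →₀ ℕ} (hx : x ∈ X)
    (hy : y ∈ X) (h : x + y = J + J) : emb J ∈ newton X := by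
  have hmid : emb J = (1 / 2 : ℝ) • emb x + (1 / 2 : ℝ) • emb y := by
    rw [← smul_add, ← emb_add, h, emb_add]
    module
  rw [hmid]
  exact convex_convexHull ℝ _ (emb_mem_newton hx) (emb_mem_newton hy)
    (by norm_num) (by norm_num) (by norm_num)

lemma mem_vert_of_subset {X Y : Set (Fin m →₀ ℕ)} {J : Fin m →₀ ℕ} (hXY : X ⊆ Y)
    (hJ : J ∈ vert Y) (hJX : J ∈ X) : J ∈ vert X :=
  ⟨hJX, fun h => hJ.2 (newton_mono (Set.sdiff_subset_sdiff_left hXY) h)⟩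

lemma mem_vert_left_of_add_mem_vert {X Y : Set (Fin m →₀ ℕ)} {a b : Fin m →₀ ℕ}
    (hab : a + b ∈ vert (X + Y)) (ha : a ∈ X) (hb : b ∈ Y) : a ∈ vert X := by
  refine ⟨ha, fun hna => hab.2 ?_⟩
  have hshift : emb (a + b) ∈ newton ((X \ {a}) + {b}) := by
    rw [newton_add_singleton, emb_add]
    exact Set.add_mem_add hna rfl
  refine newton_mono ?_ hshift
  rintro _ ⟨x, ⟨hx, hxa⟩, _, rfl, rfl⟩
  exact ⟨Set.add_mem_add hx hb, fun h => hxa (add_right_cancel h)⟩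

lemma mem_vert_right_of_add_mem_vert {X Y : Set (Fin m →₀ ℕ)} {a b : Fin m →₀ ℕ}
    (hab : a + b ∈ vert (X + Y)) (ha : a ∈ X) (hb : b ∈ Y) : b ∈ vert Y := by
  rw [add_comm a, add_comm X] at hab
  exact mem_vert_left_of_add_mem_vert hab hb ha

lemma eq_of_add_eq_mem_vert {X Y : Set (Fin m →₀ ℕ)} {a a' b b' : Fin m →₀ ℕ}
    (hab : a + b ∈ vert (X + Y)) (ha : a ∈ X) (hb : b ∈ Y) (ha' : a' ∈ X) (hb' : b' ∈ Y)
    (h : a' + b' = a + b) : a' = a := by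
  by_contra hne
  refine hab.2 (emb_mem_newton_of_add_eq (x := a + b') (y := a' + b) ⟨Set.add_mem_add ha hb', ?_⟩
    ⟨Set.add_mem_add ha' hb, ?_⟩ (by nth_rw 1 [← h]; abel))
  · rw [← h]
    exact fun h' => hne (add_right_cancel h').symm
  · exact fun h' => hne (add_right_cancel h')

end Newton

section SharpBound

variable {K : Type} [Field K] {m : ℕ}

def SharpBound (f : MvPowerSeries (Fin m) K) (X : Set (Fin m →₀ ℕ)) : Prop :=
  supp f ⊆ X ∧ ∀ J ∈ vert X, MvPowerSeries.coeff J f ≠ 0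

lemma sharpBound_supp (f : MvPowerSeries (Fin m) K) : SharpBound f (supp f) :=
  ⟨subset_rfl, fun _ hJ => hJ.1⟩

lemma sharpBound_one : SharpBound (1 : MvPowerSeries (Fin m) K) 0 := by
  refine ⟨fun L hL => Set.mem_zero.2 ?_, fun J hJ => ?_⟩
  · by_contra h
    exact hL (by simp [MvPowerSeries.coeff_one, h])
  · rw [Set.mem_zero.1 hJ.1]
    simp

lemma SharpBound.mul {f g : MvPowerSeries (Fin m) K} {X Y : Set (Fin m →₀ ℕ)}
    (hf : SharpBound f X) (hg : SharpBound g Y) : SharpBound (f * g) (X + Y) := by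
  refine ⟨fun L hL => ?_, fun J hJ => ?_⟩
  · obtain ⟨p, hp, hne⟩ := Finset.exists_ne_zero_of_sum_ne_zero
      ((MvPowerSeries.coeff_mul L f g).symm.trans_ne hL)
    rw [← Finset.HasAntidiagonal.mem_antidiagonal.1 hp]
    exact Set.add_mem_add (hf.1 (left_ne_zero_of_mul hne)) (hg.1 (right_ne_zero_of_mul hne))
  obtain ⟨a, ha, b, hb, rfl⟩ := Set.mem_add.1 hJ.1
  rw [MvPowerSeries.coeff_mul, Finset.sum_eq_single_of_mem (a, b)
    (Finset.HasAntidiagonal.mem_antidiagonal.2 rfl)]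
  · exact mul_ne_zero (hf.2 a (mem_vert_left_of_add_mem_vert hJ ha hb))
      (hg.2 b (mem_vert_right_of_add_mem_vert hJ ha hb))
  rintro ⟨a', b'⟩ hp hne
  rw [Finset.HasAntidiagonal.mem_antidiagonal] at hp
  by_contra hcoeff
  have ha' : a' ∈ X := hf.1 (left_ne_zero_of_mul hcoeff)
  have hb' : b' ∈ Y := hg.1 (right_ne_zero_of_mul hcoeff)
  obtain rfl : a' = a := eq_of_add_eq_mem_vert hJ ha hb ha' hb' hp
  exact hne (Prod.ext rfl (add_left_cancel hp))

lemma SharpBound.pow {f : MvPowerSeries (Fin m) K} {X : Set (Fin m →₀ ℕ)}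
    (hf : SharpBound f X) : ∀ k : ℕ, SharpBound (f ^ k) (nMink k X)
  | 0 => by simpa [nMink, Set.singleton_zero] using sharpBound_one
  | k + 1 => by
    rw [pow_succ']
    exact hf.mul (hf.pow k)

lemma SharpBound.prod {ι : Type*} (s : Finset ι) {f : ι → MvPowerSeries (Fin m) K}
    {X : ι → Set (Fin m →₀ ℕ)} (h : ∀ i ∈ s, SharpBound (f i) (X i)) :
    SharpBound (∏ i ∈ s, f i) (∑ i ∈ s, X i) := by
  induction s using Finset.cons_induction with
  | empty => simpa using sharpBound_one
  | cons i s his ih =>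
    rw [Finset.prod_cons, Finset.sum_cons]
    exact (h i (Finset.mem_cons_self i s)).mul (ih fun j hj => h j (Finset.mem_cons_of_mem hj))

lemma sharpBound_theta [CharZero K] (J : Fin m →₀ ℕ) (ψ : MvPowerSeries (Fin m) K) :
    SharpBound (theta J ψ) (thetaTrop J (supp ψ)) := by
  have hfactor : ∀ L : Fin m →₀ ℕ,
      ((∏ i : Fin m, ((L i + J i).factorial / (L i).factorial) : ℕ) : K) ≠ 0 := fun L =>
    Nat.cast_ne_zero.2 (Finset.prod_pos fun i _ =>
      Nat.div_pos (Nat.factorial_le (Nat.le_add_right _ _)) (Nat.factorial_pos _)).ne'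
  exact ⟨fun L hL => right_ne_zero_of_mul hL, fun L hL => mul_ne_zero (hfactor L) hL.1⟩

lemma exists_two_mem_vert_of_sum_eq_zero {ι : Type*} {s : Finset ι}
    {f : ι → MvPowerSeries (Fin m) K} {B : ι → Set (Fin m →₀ ℕ)}
    (hB : ∀ i ∈ s, SharpBound (f i) (B i)) (hsum : ∑ i ∈ s, f i = 0) :
    ∀ J ∈ vert (⋃ i ∈ s, B i), ∃ i₁ ∈ s, ∃ i₂ ∈ s,
      i₁ ≠ i₂ ∧ J ∈ vert (B i₁) ∧ J ∈ vert (B i₂) := by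
  intro J hJ
  have hvert : ∀ i ∈ s, J ∈ B i → J ∈ vert (B i) := fun i hi =>
    mem_vert_of_subset (Set.subset_biUnion_of_mem (u := B) hi) hJ
  obtain ⟨i₁, hi₁, hJ₁⟩ := Set.mem_iUnion₂.1 hJ.1
  have hcoeff₁ : MvPowerSeries.coeff J (f i₁) ≠ 0 := (hB i₁ hi₁).2 J (hvert i₁ hi₁ hJ₁)
  have hcancel : ∑ i ∈ s, MvPowerSeries.coeff J (f i) = 0 := by
    rw [← map_sum, hsum, map_zero]
  obtain ⟨i₂, hi₂, hne, hcoeff₂⟩ : ∃ i₂ ∈ s, i₂ ≠ i₁ ∧ MvPowerSeries.coeff J (f i₂) ≠ 0 := by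
    by_contra! hzero
    exact hcoeff₁ ((Finset.sum_eq_single_of_mem i₁ hi₁ hzero).symm.trans hcancel)
  exact ⟨i₁, hi₁, i₂, hi₂, hne.symm, hvert i₁ hi₁ hJ₁, hvert i₂ hi₂ ((hB i₂ hi₂).1 hcoeff₂)⟩

end SharpBound

open MvPowerSeries in
theorem support_of_solution_is_tropical_solution_general
    (K : Type) [Field K] [CharZero K] (m n : ℕ)
    (Δ : Finset ((Fin n × (Fin m →₀ ℕ)) →₀ ℕ))
    (α : ((Fin n × (Fin m →₀ ℕ)) →₀ ℕ) → MvPowerSeries (Fin m) K)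
    (φ : Fin n → MvPowerSeries (Fin m) K)
    (hφ : ∑ M ∈ Δ, α M * (M.prod fun p k => theta p.2 (φ p.1) ^ k) = 0)
    (S : Fin n → Set (Fin m →₀ ℕ)) (hS : ∀ i, S i = supp (φ i))
    (B : ((Fin n × (Fin m →₀ ℕ)) →₀ ℕ) → Set (Fin m →₀ ℕ))
    (hB : ∀ M, B M = supp (α M) + M.sum fun p k => nMink k (thetaTrop p.2 (S p.1))) :
    ∀ J ∈ vert (⋃ M ∈ Δ, B M), ∃ M₁ ∈ Δ, ∃ M₂ ∈ Δ,
      M₁ ≠ M₂ ∧ J ∈ vert (B M₁) ∧ J ∈ vert (B M₂) := by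
  refine exists_two_mem_vert_of_sum_eq_zero (fun M _ => ?_) hφ
  rw [hB M, Finsupp.prod, Finsupp.sum]
  refine (sharpBound_supp (α M)).mul (SharpBound.prod _ fun p _ => ?_)
  rw [hS p.1]
  exact (sharpBound_theta p.2 (φ p.1)).pow (M p)

open MvPowerSeries in
/-- The support of a power series solution of a differential polynomial is a
solution of the tropicalization of that differential polynomial. -/
theorem support_of_solution_is_tropical_solution
    (K : Type) [Field K] [IsAlgClosed K] [CharZero K] (m n : ℕ)
    (hm : 1 ≤ m) (hn : 1 ≤ n)
    (Δ : Finset ((Fin n × (Fin m →₀ ℕ)) →₀ ℕ))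
    (α : ((Fin n × (Fin m →₀ ℕ)) →₀ ℕ) → MvPowerSeries (Fin m) K)
    (hα : ∀ M ∈ Δ, α M ≠ 0)
    (φ : Fin n → MvPowerSeries (Fin m) K)
    (hφ : ∑ M ∈ Δ, α M * (M.prod fun p k => theta p.2 (φ p.1) ^ k) = 0)
    (S : Fin n → Set (Fin m →₀ ℕ)) (hS : ∀ i, S i = supp (φ i))
    (B : ((Fin n × (Fin m →₀ ℕ)) →₀ ℕ) → Set (Fin m →₀ ℕ))
    (hB : ∀ M, B M = supp (α M) + M.sum fun p k => nMink k (thetaTrop p.2 (S p.1))) :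
    ∀ J ∈ vert (⋃ M ∈ Δ, B M), ∃ M₁ ∈ Δ, ∃ M₂ ∈ Δ,
      M₁ ≠ M₂ ∧ J ∈ vert (B M₁) ∧ J ∈ vert (B M₂) :=
  support_of_solution_is_tropical_solution_general K m n Δ α φ hφ S hS B hB

end
end
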